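/- Let 𝔅 be a bornology on a metric space X with closed base, and let ℐ be an ideal on ω with a pseudounion. If X has the ℐ-𝔅ˢ-Hurewicz property, then X has the 𝔅ˢ-Hurewicz property. -/

import Mathlib

/- Apply the ℐ-Hurewicz property to the covers 𝒲ₙ whose members are the intersections
U₀ ∩ ⋯ ∩ Uₙ with Uⱼ ∈ 𝒰ⱼ. Each member of 𝒲ₙ lies in a member of 𝒰ₘ for every m ≤ n, so a finite
𝒱ₙ ⊆ 𝒲ₙ yields a finite subfamily of 𝒰ₘ. For a bounded B, the set of n at which 𝒱ₙ fails to
swallow an enlargement of B lies in ℐ, hence meets the complement of the pseudounion A only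
finitely often. Reading 𝒰ₘ off 𝒱_{f(m)} with f(m) ∉ A and f(m) > m therefore gives the
𝔅ˢ-Hurewicz property. -/

open Set

def IsIdeal (I : Set (Set ℕ)) : Prop :=
  (∀ A ∈ I, ∀ B ⊆ A, B ∈ I) ∧ (∀ A ∈ I, ∀ B ∈ I, A ∪ B ∈ I) ∧
  (∀ A : Set ℕ, A.Finite → A ∈ I) ∧ Set.univ ∉ I

def IsPseudounion (I : Set (Set ℕ)) (A : Set ℕ) : Prop :=
  Aᶜ.Infinite ∧ ∀ K ∈ I, (K \ A).Finite

def enl {X : Type*} [PseudoMetricSpace X] (B : Set X) (δ : ℝ) : Set X :=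
  ⋃ x ∈ B, Metric.ball x δ

def IsBornology {X : Type*} (𝔅 : Set (Set X)) : Prop :=
  (∀ B ∈ 𝔅, ∀ B' ⊆ B, B' ∈ 𝔅) ∧ (∀ B ∈ 𝔅, ∀ B' ∈ 𝔅, B ∪ B' ∈ 𝔅) ∧
  (∀ x : X, ∃ B ∈ 𝔅, x ∈ B)

def IsBase {X : Type*} (𝔅 𝔅₀ : Set (Set X)) : Prop :=
  𝔅₀ ⊆ 𝔅 ∧ ∀ B ∈ 𝔅, ∃ B₀ ∈ 𝔅₀, B ⊆ B₀

def HasClosedBase {X : Type*} [PseudoMetricSpace X] (𝔅 : Set (Set X)) : Prop :=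
  ∃ 𝔅₀, IsBase 𝔅 𝔅₀ ∧ ∀ B ∈ 𝔅₀, IsClosed B

def IGammaCover {X : Type*} [PseudoMetricSpace X] (𝔅 : Set (Set X))
    (I : Set (Set ℕ)) (U : ℕ → Set X) : Prop :=
  (∀ n, IsOpen (U n)) ∧ (⋃ n, U n) = Set.univ ∧
  ∀ B ∈ 𝔅, ∃ δ : ℕ → ℝ, (∀ n, 0 < δ n) ∧ {n | ¬ enl B (δ n) ⊆ U n} ∈ I

def GammaCover {X : Type*} [PseudoMetricSpace X] (𝔅 : Set (Set X))
    (U : ℕ → Set X) : Prop :=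
  (∀ n, IsOpen (U n)) ∧ (⋃ n, U n) = Set.univ ∧
  ∀ B ∈ 𝔅, ∃ n₀ : ℕ, ∃ δ : ℕ → ℝ, ∀ n ≥ n₀, 0 < δ n ∧ enl B (δ n) ⊆ U n

def OBsCover {X : Type*} [PseudoMetricSpace X] (𝔅 : Set (Set X))
    (𝒰 : Set (Set X)) : Prop :=
  (∀ U ∈ 𝒰, IsOpen U) ∧ Set.univ ∉ 𝒰 ∧ ⋃₀ 𝒰 = Set.univ ∧
  ∀ B ∈ 𝔅, ∃ U ∈ 𝒰, ∃ δ > 0, enl B δ ⊆ U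

def IHurewicz {X : Type*} [PseudoMetricSpace X] (𝔅 : Set (Set X))
    (I : Set (Set ℕ)) : Prop :=
  ∀ 𝒰 : ℕ → Set (Set X), (∀ n, OBsCover 𝔅 (𝒰 n)) →
    ∃ V : ℕ → Set (Set X), (∀ n, V n ⊆ 𝒰 n ∧ (V n).Finite) ∧
      ∀ B ∈ 𝔅, ∃ δ : ℕ → ℝ, (∀ n, 0 < δ n) ∧
        {n | ∀ U ∈ V n, ¬ enl B (δ n) ⊆ U} ∈ I

def BsHurewicz {X : Type*} [PseudoMetricSpace X] (𝔅 : Set (Set X)) : Prop :=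
  ∀ 𝒰 : ℕ → Set (Set X), (∀ n, OBsCover 𝔅 (𝒰 n)) →
    ∃ V : ℕ → Set (Set X), (∀ n, V n ⊆ 𝒰 n ∧ (V n).Finite) ∧
      ∀ B ∈ 𝔅, ∃ n₀ : ℕ, ∃ δ : ℕ → ℝ, ∀ n ≥ n₀, 0 < δ n ∧ ∃ U ∈ V n, enl B (δ n) ⊆ U

open Filter Topology

theorem IsPseudounion.exists_forall_notMem {I : Set (Set ℕ)} {A K : Set ℕ}
    (hA : IsPseudounion I A) (hK : K ∈ I) : ∃ N, ∀ k ∉ A, N < k → k ∉ K := by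
  obtain ⟨N, hN⟩ := (hA.2 K hK).bddAbove
  exact ⟨N, fun k hkA hNk hkK => hNk.not_ge (hN ⟨hkK, hkA⟩)⟩

theorem Set.Finite.exists_finite_subset_forall_subset {α : Type*} {W 𝒰 : Set (Set α)}
    (hW : W.Finite) (h : ∀ S ∈ W, ∃ U ∈ 𝒰, S ⊆ U) :
    ∃ V ⊆ 𝒰, V.Finite ∧ ∀ S ∈ W, ∃ U ∈ V, S ⊆ U := by
  choose g hg𝒰 hSg using h
  have : Finite W := hW.to_subtype
  refine ⟨range fun S : W => g S S.2, ?_, finite_range _,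
    fun S hS => ⟨g S hS, ⟨⟨S, hS⟩, rfl⟩, hSg S hS⟩⟩
  rintro _ ⟨S, rfl⟩
  exact hg𝒰 S S.2

section Enlargement

variable {X : Type*} [PseudoMetricSpace X]

theorem enl_mono {B : Set X} {δ δ' : ℝ} (h : δ ≤ δ') : enl B δ ⊆ enl B δ' :=
  iUnion₂_mono fun _ _ => Metric.ball_subset_ball h

theorem eventually_enl_subset {B U : Set X} (h : ∃ δ > 0, enl B δ ⊆ U) :
    ∀ᶠ δ in 𝓝[>] 0, enl B δ ⊆ U := by
  obtain ⟨δ₀, hδ₀, hsub⟩ := h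
  filter_upwards [Ioo_mem_nhdsGT hδ₀] with δ hδ
  exact (enl_mono hδ.2.le).trans hsub

theorem exists_enl_subset_biInter {ι : Type*} {s : Set ι} (hs : s.Finite) {B : Set X}
    {U : ι → Set X} (h : ∀ j ∈ s, ∃ δ > 0, enl B δ ⊆ U j) :
    ∃ δ > 0, enl B δ ⊆ ⋂ j ∈ s, U j := by
  have hev : ∀ᶠ δ in 𝓝[>] (0 : ℝ), ∀ j ∈ s, enl B δ ⊆ U j :=
    (eventually_all_finite hs).2 fun j hj => eventually_enl_subset (h j hj)
  obtain ⟨δ, hδU, hδ⟩ := (hev.and self_mem_nhdsWithin).exists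
  exact ⟨δ, hδ, subset_iInter₂ hδU⟩

end Enlargement

def iInterCover {α : Type*} (𝒰 : ℕ → Set (Set α)) (n : ℕ) : Set (Set α) :=
  {S | ∃ U : ℕ → Set α, (∀ j ≤ n, U j ∈ 𝒰 j) ∧ S = ⋂ j ≤ n, U j}

theorem exists_mem_superset_of_mem_iInterCover {α : Type*} {𝒰 : ℕ → Set (Set α)} {n m : ℕ}
    {S : Set α} (hS : S ∈ iInterCover 𝒰 n) (hm : m ≤ n) : ∃ U ∈ 𝒰 m, S ⊆ U := by
  obtain ⟨U, hU, rfl⟩ := hS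
  exact ⟨U m, hU m hm, biInter_subset_of_mem (s := Iic n) hm⟩

theorem OBsCover.iInterCover {X : Type*} [PseudoMetricSpace X] {𝔅 : Set (Set X)}
    {𝒰 : ℕ → Set (Set X)} (h𝒰 : ∀ n, OBsCover 𝔅 (𝒰 n)) (n : ℕ) :
    OBsCover 𝔅 (iInterCover 𝒰 n) := by
  refine ⟨?_, ?_, ?_, ?_⟩
  · rintro _ ⟨U, hU, rfl⟩
    exact (finite_Iic n).isOpen_biInter fun j hj => (h𝒰 j).1 _ (hU j hj)
  · intro huniv
    obtain ⟨U, hU, hUuniv⟩ := exists_mem_superset_of_mem_iInterCover huniv (Nat.zero_le n)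
    exact (h𝒰 0).2.1 (univ_subset_iff.1 hUuniv ▸ hU)
  · refine eq_univ_of_forall fun x => ?_
    choose U hU hxU using fun j => mem_sUnion.1 ((h𝒰 j).2.2.1.symm ▸ mem_univ x : x ∈ ⋃₀ 𝒰 j)
    exact ⟨_, ⟨U, fun j _ => hU j, rfl⟩, mem_iInter₂.2 fun j _ => hxU j⟩
  · intro B hB
    choose U hU hBU using fun j => (h𝒰 j).2.2.2 B hB
    obtain ⟨δ, hδ, hsub⟩ := exists_enl_subset_biInter (finite_Iic n) fun j _ => hBU j
    exact ⟨_, ⟨U, fun j _ => hU j, rfl⟩, δ, hδ, hsub⟩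

theorem ihurewicz_to_hurewicz_of_pseudounion_general {X : Type*} [MetricSpace X]
    (𝔅 : Set (Set X))
    (I : Set (Set ℕ)) (hpu : ∃ A, IsPseudounion I A)
    (h : IHurewicz 𝔅 I) : BsHurewicz 𝔅 := by
  intro 𝒰 h𝒰
  obtain ⟨A, hA⟩ := hpu
  obtain ⟨W, hW, hWB⟩ := h (iInterCover 𝒰) (OBsCover.iInterCover h𝒰)
  choose f hfA hmf using fun m => hA.1.exists_gt m
  choose V hV𝒰 hVfin hWV using fun m => (hW (f m)).2.exists_finite_subset_forall_subset
    fun S hS => exists_mem_superset_of_mem_iInterCover ((hW (f m)).1 hS) (hmf m).le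
  refine ⟨V, fun m => ⟨hV𝒰 m, hVfin m⟩, fun B hB => ?_⟩
  obtain ⟨δ, hδ, hbad⟩ := hWB B hB
  obtain ⟨N, hN⟩ := hA.exists_forall_notMem hbad
  refine ⟨N, fun m => δ (f m), fun m hm => ⟨hδ (f m), ?_⟩⟩
  obtain ⟨S, hS, hBS⟩ : ∃ S ∈ W (f m), enl B (δ (f m)) ⊆ S := by
    simpa using hN (f m) (hfA m) (by have := hmf m; omega)
  obtain ⟨U, hU, hSU⟩ := hWV m S hS
  exact ⟨U, hU, hBS.trans hSU⟩

theorem ihurewicz_to_hurewicz_of_pseudounion {X : Type*} [MetricSpace X]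
    (𝔅 : Set (Set X)) (hB : IsBornology 𝔅) (hcb : HasClosedBase 𝔅)
    (I : Set (Set ℕ)) (hI : IsIdeal I) (hpu : ∃ A, IsPseudounion I A)
    (h : IHurewicz 𝔅 I) : BsHurewicz 𝔅 :=
  ihurewicz_to_hurewicz_of_pseudounion_general 𝔅 I hpu h
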